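/- arXiv:2009.03702 — 3 statements merged into one kernel-verified Lean document; each statement's English description precedes it below -/
import Mathlib

section
/- Let ζ : (0,∞) → ℝ be continuous with bounded support and let k ∈ ℕ ∪ {0}. If ∫_0^∞ ζ(√(r² + t²)) r^k dr = 0 for every t > 0, then ζ(s) = 0 for every s > 0. -/
open Filter Topology MeasureTheory Set

noncomputable section

abbrev En (n : ℕ) : Type := EuclideanSpace ℝ (Fin n)

/-- Super-coercive, convex, lower semicontinuous, proper function on `ℝⁿ` with values in
`ℝ ∪ {+∞}` (modelled as `EReal`). -/
def IsConvSc {n : ℕ} (u : En n → EReal) : Prop :=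
  (∀ x y : En n, ∀ t : ℝ, 0 ≤ t → t ≤ 1 →
      u ((1 - t) • x + t • y) ≤ ((1 - t : ℝ) : EReal) * u x + ((t : ℝ) : EReal) * u y) ∧
  LowerSemicontinuous u ∧
  (∃ x, u x ≠ ⊤) ∧
  (∀ C : ℝ, ∃ R : ℝ, ∀ x : En n, R ≤ ‖x‖ → ((C * ‖x‖ : ℝ) : EReal) ≤ u x)

/-- Epi-convergence of a sequence of `EReal`-valued functions. -/
def EpiConvergesTo {n : ℕ} (uk : ℕ → En n → EReal) (u : En n → EReal) : Prop :=
  (∀ x : En n, ∀ xk : ℕ → En n, Tendsto xk atTop (𝓝 x) →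
      u x ≤ Filter.liminf (fun k => uk k (xk k)) atTop) ∧
  (∀ x : En n, ∃ xk : ℕ → En n, Tendsto xk atTop (𝓝 x) ∧
      Tendsto (fun k => uk k (xk k)) atTop (𝓝 (u x)))

/-- Sequential continuity of a functional on `Conv_sc(ℝⁿ)` with respect to epi-convergence. -/
def ContinuousValSc {n : ℕ} (Z : (En n → EReal) → ℝ) : Prop :=
  ∀ (uk : ℕ → En n → EReal) (u : En n → EReal),
    (∀ k, IsConvSc (uk k)) → IsConvSc u → EpiConvergesTo uk u →
      Tendsto (fun k => Z (uk k)) atTop (𝓝 (Z u))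

/-- Valuation property on `Conv_sc(ℝⁿ)`. -/
def IsValuationSc {n : ℕ} (Z : (En n → EReal) → ℝ) : Prop :=
  ∀ u v : En n → EReal, IsConvSc u → IsConvSc v → IsConvSc (u ⊔ v) → IsConvSc (u ⊓ v) →
    Z u + Z v = Z (u ⊔ v) + Z (u ⊓ v)

/-- Epi-translation invariance on `Conv_sc(ℝⁿ)`. -/
def EpiTranslInvSc {n : ℕ} (Z : (En n → EReal) → ℝ) : Prop :=
  ∀ u : En n → EReal, IsConvSc u → ∀ (x₀ : En n) (c : ℝ),
    Z (fun x => u (x - x₀) + (c : EReal)) = Z u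

/-- A rotation of `ℝⁿ`: a linear isometry with determinant one. -/
def IsRotation {n : ℕ} (ϑ : En n ≃ₗᵢ[ℝ] En n) : Prop :=
  LinearMap.det (ϑ.toLinearEquiv : En n →ₗ[ℝ] En n) = 1

/-- Rotation invariance on `Conv_sc(ℝⁿ)`. -/
def RotInvSc {n : ℕ} (Z : (En n → EReal) → ℝ) : Prop :=
  ∀ u : En n → EReal, IsConvSc u → ∀ ϑ : En n ≃ₗᵢ[ℝ] En n, IsRotation ϑ →
    Z (fun x => u (ϑ.symm x)) = Z u

/-- The Hessian matrix of `f : ℝⁿ → ℝ` at `x`. -/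
def hessMat {n : ℕ} (f : En n → ℝ) (x : En n) : Matrix (Fin n) (Fin n) ℝ :=
  Matrix.of fun i j =>
    fderiv ℝ (fun y => fderiv ℝ f y (EuclideanSpace.single j (1 : ℝ))) x
      (EuclideanSpace.single i (1 : ℝ))

/-- `[A]ₖ`, the `k`-th elementary symmetric function of the eigenvalues of an `n × n` matrix,
expressed via the characteristic polynomial; `[A]₀ = 1`. -/
def esymmMat {n : ℕ} (A : Matrix (Fin n) (Fin n) ℝ) (k : ℕ) : ℝ :=
  (-1 : ℝ) ^ k * (Matrix.charpoly A).coeff (n - k)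

/-- The class `Had_j^n` of singular densities. -/
def HadClass (n j : ℕ) (ζ : ℝ → ℝ) : Prop :=
  ContinuousOn ζ (Set.Ioi 0) ∧ (∃ R : ℝ, 0 < R ∧ ∀ s : ℝ, R ≤ s → ζ s = 0) ∧
  (if j = n then
      Tendsto ζ (𝓝[>] (0 : ℝ)) (𝓝 (ζ 0))
    else if j = 0 then
      ∃ L : ℝ, Tendsto (fun s : ℝ => ∫ t in Set.Ioi s, t ^ (n - 1) * ζ t) (𝓝[>] (0 : ℝ)) (𝓝 L)
    else
      Tendsto (fun s : ℝ => s ^ (n - j) * ζ s) (𝓝[>] (0 : ℝ)) (𝓝 0) ∧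
      ∃ L : ℝ, Tendsto (fun s : ℝ => ∫ t in Set.Ioi s, t ^ (n - j - 1) * ζ t)
        (𝓝[>] (0 : ℝ)) (𝓝 L))

/-- `Z(u) = ∫ ζ(|∇u|)[D²u]_{n-j} dx` on smooth strictly convex functions in `Conv_sc(ℝⁿ)`. -/
def HessFormulaSc {n : ℕ} (Z : (En n → EReal) → ℝ) (ζ : ℝ → ℝ) (j : ℕ) : Prop :=
  ∀ f : En n → ℝ, IsConvSc (fun x => (f x : EReal)) → ContDiff ℝ 2 f →
    (∀ x, (hessMat f x).PosDef) →
    Z (fun x => (f x : EReal)) = ∫ x : En n, ζ ‖gradient f x‖ * esymmMat (hessMat f x) (n - j)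

/-- Epi-multiplication `(λ ⌑ u)(x) = λ u(x/λ)`. -/
def epiSmul {n : ℕ} (lam : ℝ) (u : En n → EReal) : En n → EReal :=
  fun x => (lam : EReal) * u (lam⁻¹ • x)

/-- Sequential continuity of a functional on `Conv(ℝⁿ;ℝ)` with respect to uniform convergence
on compact sets. -/
def ContinuousValFin {n : ℕ} (Z : (En n → ℝ) → ℝ) : Prop :=
  ∀ (vk : ℕ → En n → ℝ) (v : En n → ℝ),
    (∀ k, ConvexOn ℝ Set.univ (vk k)) → ConvexOn ℝ Set.univ v →
    (∀ K : Set (En n), IsCompact K → TendstoUniformlyOn vk v atTop K) →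
      Tendsto (fun k => Z (vk k)) atTop (𝓝 (Z v))

/-- Valuation property on `Conv(ℝⁿ;ℝ)`. -/
def IsValuationFin {n : ℕ} (Z : (En n → ℝ) → ℝ) : Prop :=
  ∀ u v : En n → ℝ, ConvexOn ℝ Set.univ u → ConvexOn ℝ Set.univ v →
    ConvexOn ℝ Set.univ (u ⊔ v) → ConvexOn ℝ Set.univ (u ⊓ v) →
    Z u + Z v = Z (u ⊔ v) + Z (u ⊓ v)

/-- Dual epi-translation invariance: invariance under addition of linear functions and
constants. -/
def DualEpiTranslInv {n : ℕ} (Z : (En n → ℝ) → ℝ) : Prop :=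
  ∀ v : En n → ℝ, ConvexOn ℝ Set.univ v → ∀ (y : En n) (c : ℝ),
    Z (fun x => v x + (inner ℝ y x : ℝ) + c) = Z v

/-- Rotation invariance on `Conv(ℝⁿ;ℝ)`. -/
def RotInvFin {n : ℕ} (Z : (En n → ℝ) → ℝ) : Prop :=
  ∀ v : En n → ℝ, ConvexOn ℝ Set.univ v → ∀ ϑ : En n ≃ₗᵢ[ℝ] En n, IsRotation ϑ →
    Z (fun x => v (ϑ.symm x)) = Z v

/-- `Z(v) = ∫ ζ(|x|)[D²v]_j dx` on smooth strictly convex functions in `Conv(ℝⁿ;ℝ)`. -/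
def HessFormulaFin {n : ℕ} (Z : (En n → ℝ) → ℝ) (ζ : ℝ → ℝ) (j : ℕ) : Prop :=
  ∀ v : En n → ℝ, ConvexOn ℝ Set.univ v → ContDiff ℝ 2 v →
    (∀ x, (hessMat v x).PosDef) →
    Z v = ∫ x : En n, ζ ‖x‖ * esymmMat (hessMat v x) j


/-!
Put `F(w) = ζ(√w)` and `I_b F(c) = ∫_c^∞ (w - c)^b F(w) dw` (`tailMoment F b c`). The substitution
`w = r² + t²` turns the hypothesis into `I_α F ≡ 0` on `(0, ∞)` with `α = (k - 1)/2`. By Fubini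
these fractional integrals compose like Riemann–Liouville integrals,
`∫_u^∞ (c - u)^a I_b F(c) dc = B(a + 1, b + 1) · I_{a+b+1} F(u)`, and the Beta factor never
vanishes. Composing `I_α` with itself gives `I_k F ≡ 0`. For `a = 0` the law says that
`∫_u^∞ I_m F` is a multiple of `I_{m+1} F(u)`, so `I_{m+1} F ≡ 0` forces the continuous function
`I_m F` to vanish; descending from `m = k` to `I_0 F(u) = ∫_u^∞ F` gives `F = 0`.
-/

open Real

lemma integrableOn_Ioc_sub_rpow {b : ℝ} (hb : -1 < b) (u v : ℝ) :
    IntegrableOn (fun w => (w - u) ^ b) (Ioc u v) := by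
  have h := (intervalIntegral.intervalIntegrable_rpow' hb (a := 0) (b := v - u)).comp_sub_right u
  rw [zero_add, sub_add_cancel] at h
  exact h.1

lemma exists_abs_le_of_continuousOn_of_eq_zero {f : ℝ → ℝ} {M a : ℝ}
    (hf : ContinuousOn f (Ioi 0)) (hM : ∀ w, M ≤ w → f w = 0) (ha : 0 < a) :
    ∃ C, ∀ w, a ≤ w → |f w| ≤ C := by
  obtain ⟨C, hC⟩ := isCompact_Icc.exists_bound_of_continuousOn
    (hf.mono fun x (hx : x ∈ Icc a M) => ha.trans_le hx.1)
  refine ⟨max C 0, fun w hw => ?_⟩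
  rcases le_or_gt w M with hwM | hwM
  · exact (hC w ⟨hw, hwM⟩).trans (le_max_left _ _)
  · simp [hM w hwM.le]

lemma integrableOn_Ioi_of_continuousOn_of_eq_zero {f : ℝ → ℝ} {M a : ℝ}
    (hf : ContinuousOn f (Ioi 0)) (hM : ∀ w, M ≤ w → f w = 0) (ha : 0 < a) :
    IntegrableOn f (Ioi a) :=
  ((hf.mono fun x (hx : x ∈ Icc a M) => ha.trans_le hx.1).integrableOn_compact isCompact_Icc
    |>.mono_set Ioc_subset_Icc_self).of_forall_sdiff_eq_zero measurableSet_Ioi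
    fun w hw => hM w (not_le.1 (not_and.1 hw.2 hw.1)).le

lemma integrableOn_Ioi_sub_rpow_mul {f : ℝ → ℝ} {M c b : ℝ}
    (hf : ContinuousOn f (Ioi 0)) (hM : ∀ w, M ≤ w → f w = 0) (hc : 0 < c) (hb : -1 < b) :
    IntegrableOn (fun w => (w - c) ^ b * f w) (Ioi c) :=
  ((integrableOn_Ioc_sub_rpow hb c M).mul_continuousOn_of_subset
    (hf.mono fun x (hx : x ∈ Icc c M) => hc.trans_le hx.1) measurableSet_Ioc isCompact_Icc
    Ioc_subset_Icc_self).of_forall_sdiff_eq_zero measurableSet_Ioi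
    fun w hw => by simp [hM w (not_le.1 (not_and.1 hw.2 hw.1)).le]

lemma eq_zero_of_forall_integral_Ioi_eq_zero {f : ℝ → ℝ} (hf : ContinuousOn f (Ioi 0))
    (hi : ∀ a, 0 < a → IntegrableOn f (Ioi a)) (hz : ∀ u, 0 < u → ∫ w in Ioi u, f w = 0)
    {u : ℝ} (hu : 0 < u) : f u = 0 := by
  have ha : 0 < u / 2 := by positivity
  have hau : u / 2 < u := by linarith
  have hprim : HasDerivAt (fun x => ∫ t in u / 2..x, f t) (f u) u :=
    intervalIntegral.integral_hasDerivAt_right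
      ((intervalIntegrable_iff_integrableOn_Ioc_of_le hau.le).2
        ((hi _ ha).mono_set Ioc_subset_Ioi_self))
      ((hf.mono (Ioi_subset_Ioi ha.le)).stronglyMeasurableAtFilter_nhdsWithin measurableSet_Ioi u
        |>.filter_mono (nhdsWithin_eq_nhds.2 (Ioi_mem_nhds hau)).ge)
      (hf.continuousAt (Ioi_mem_nhds hu))
  have hconst : (fun x => ∫ t in u / 2..x, f t) =ᶠ[𝓝 u] fun _ => 0 := by
    filter_upwards [Ioi_mem_nhds hau] with x hx
    rw [← intervalIntegral.integral_Ioi_sub_Ioi (hi _ ha) hx.le, hz _ ha, hz _ (ha.trans hx),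
      sub_zero]
  exact hprim.unique ((hasDerivAt_const u 0).congr_of_eventuallyEq hconst)

def tailMoment (f : ℝ → ℝ) (b c : ℝ) : ℝ := ∫ w in Ioi c, (w - c) ^ b * f w

lemma tailMoment_eq_zero_of_le {f : ℝ → ℝ} {M c : ℝ} (hM : ∀ w, M ≤ w → f w = 0)
    (hc : M ≤ c) (b : ℝ) : tailMoment f b c = 0 :=
  setIntegral_eq_zero_of_forall_eq_zero fun w hw => by simp [hM w (hc.trans (le_of_lt hw))]

lemma tailMoment_eq_integral_comp_add (f : ℝ → ℝ) (b c : ℝ) :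
    tailMoment f b c = ∫ s in Ioi 0, s ^ b * f (s + c) := by
  rw [tailMoment, ← (measurePreserving_add_right volume c).setIntegral_preimage_emb
    (measurableEmbedding_addRight c)]
  simp

lemma continuousOn_tailMoment {f : ℝ → ℝ} {M b : ℝ} (hf : ContinuousOn f (Ioi 0))
    (hM : ∀ w, M ≤ w → f w = 0) (hb : -1 < b) : ContinuousOn (tailMoment f b) (Ioi 0) := by
  intro u₀ (hu₀ : 0 < u₀)
  have ha : 0 < u₀ / 2 := by positivity
  obtain ⟨C, hC⟩ := exists_abs_le_of_continuousOn_of_eq_zero hf hM ha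
  have hnear : ∀ᶠ u in 𝓝 u₀, u₀ / 2 < u := Ioi_mem_nhds (by linarith)
  refine ContinuousAt.continuousWithinAt ?_
  simp_rw [funext (tailMoment_eq_integral_comp_add f b)]
  refine continuousAt_of_dominated (bound := (Ioc 0 M).indicator fun s => s ^ b * C) ?_ ?_ ?_ ?_
  · filter_upwards [hnear] with u hu
    refine ContinuousOn.aestronglyMeasurable ?_ measurableSet_Ioi
    refine (continuousOn_id.rpow_const fun s hs => Or.inl (ne_of_gt hs)).mul ?_
    exact hf.comp (continuous_add_const u).continuousOn fun s (hs : 0 < s) =>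
      show 0 < s + u by linarith
  · filter_upwards [hnear] with u hu
    refine (ae_restrict_iff' measurableSet_Ioi).2 (Eventually.of_forall fun s (hs : 0 < s) => ?_)
    rw [norm_mul, norm_of_nonneg (rpow_nonneg hs.le b)]
    by_cases hsM : s ≤ M
    · rw [indicator_of_mem (show s ∈ Ioc 0 M from ⟨hs, hsM⟩)]
      exact mul_le_mul_of_nonneg_left (hC (s + u) (by linarith)) (rpow_nonneg hs.le b)
    · rw [hM _ (by linarith), norm_zero, mul_zero, indicator_of_notMem fun h => hsM h.2]
  · refine ((integrable_indicator_iff measurableSet_Ioc).2 ?_).integrableOn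
    simpa [IntegrableOn] using (integrableOn_Ioc_sub_rpow hb 0 M).mul_const C
  · refine (ae_restrict_iff' measurableSet_Ioi).2 (Eventually.of_forall fun s (hs : 0 < s) => ?_)
    exact continuousAt_const.mul ((hf.continuousAt (Ioi_mem_nhds (by positivity))).comp
      (continuous_const_add s).continuousAt)

-- `B(a + 1, b + 1)` in the usual normalisation of the Beta function.
def betaReal (a b : ℝ) : ℝ := ∫ x in (0 : ℝ)..1, x ^ a * (1 - x) ^ b

lemma ofReal_integral_rpow_mul_sub_rpow {d : ℝ} (hd : 0 ≤ d) (a b : ℝ) :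
    ((∫ x in 0..d, x ^ a * (d - x) ^ b : ℝ) : ℂ) =
      ∫ x in 0..d, (x : ℂ) ^ (a : ℂ) * ((d : ℂ) - x) ^ (b : ℂ) := by
  rw [← intervalIntegral.integral_ofReal]
  refine intervalIntegral.integral_congr fun x hx => ?_
  rw [uIcc_of_le hd] at hx
  simp only [Complex.ofReal_mul]
  rw [Complex.ofReal_cpow hx.1, Complex.ofReal_cpow (sub_nonneg.2 hx.2), Complex.ofReal_sub]

lemma ofReal_betaReal (a b : ℝ) :
    (betaReal a b : ℂ) = Complex.betaIntegral (a + 1) (b + 1) := by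
  simpa [betaReal, Complex.betaIntegral] using ofReal_integral_rpow_mul_sub_rpow zero_le_one a b

lemma betaReal_ne_zero {a b : ℝ} (ha : -1 < a) (hb : -1 < b) : betaReal a b ≠ 0 := by
  have hs : 0 < ((a : ℂ) + 1).re := by simp; linarith
  have ht : 0 < ((b : ℂ) + 1).re := by simp; linarith
  have hGamma := Complex.Gamma_mul_Gamma_eq_betaIntegral hs ht
  intro h0
  rw [← ofReal_betaReal, h0, Complex.ofReal_zero, mul_zero] at hGamma
  exact mul_ne_zero (Complex.Gamma_ne_zero_of_re_pos hs) (Complex.Gamma_ne_zero_of_re_pos ht) hGamma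

lemma integral_rpow_mul_sub_rpow (a b : ℝ) {d : ℝ} (hd : 0 < d) :
    ∫ x in 0..d, x ^ a * (d - x) ^ b = d ^ (a + b + 1) * betaReal a b := by
  apply Complex.ofReal_injective
  have hscaled := Complex.betaIntegral_scaled (a + 1) (b + 1) hd
  simp only [add_sub_cancel_right] at hscaled
  rw [Complex.ofReal_mul, ofReal_integral_rpow_mul_sub_rpow hd.le, ofReal_betaReal,
    Complex.ofReal_cpow hd.le, hscaled]
  push_cast
  ring_nf

lemma integral_Ioo_sub_rpow_mul_sub_rpow (a b : ℝ) {u w : ℝ} (h : u < w) :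
    ∫ c in Ioo u w, (c - u) ^ a * (w - c) ^ b = (w - u) ^ (a + b + 1) * betaReal a b := by
  rw [← integral_Ioc_eq_integral_Ioo, ← intervalIntegral.integral_of_le h.le,
    ← integral_rpow_mul_sub_rpow a b (sub_pos.2 h), ← sub_self u,
    ← intervalIntegral.integral_comp_sub_right (fun x => x ^ a * (w - u - x) ^ b)]
  simp only [sub_sub_sub_cancel_right]

def abelKernel (f : ℝ → ℝ) (u a b : ℝ) : ℝ × ℝ → ℝ :=
  {p | p.1 < p.2}.indicator fun p => (p.1 - u) ^ a * ((p.2 - p.1) ^ b * f p.2)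

lemma abelKernel_eq_indicator_Ioi (f : ℝ → ℝ) (u a b c w : ℝ) :
    abelKernel f u a b (c, w) =
      (Ioi c).indicator (fun w => (c - u) ^ a * ((w - c) ^ b * f w)) w := by
  simp [abelKernel, indicator_apply]

lemma abelKernel_eq_indicator_Iio (f : ℝ → ℝ) (u a b c w : ℝ) :
    abelKernel f u a b (c, w) =
      (Iio w).indicator (fun c => (c - u) ^ a * ((w - c) ^ b * f w)) c := by
  simp [abelKernel, indicator_apply]

lemma setIntegral_Ioi_indicator_Ioi (g : ℝ → ℝ) {u c : ℝ} (h : u ≤ c) :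
    ∫ x in Ioi u, (Ioi c).indicator g x = ∫ x in Ioi c, g x := by
  rw [integral_indicator measurableSet_Ioi, Measure.restrict_restrict measurableSet_Ioi,
    Ioi_inter_Ioi, max_eq_left h]

lemma aestronglyMeasurable_abelKernel {f : ℝ → ℝ} (hf : ContinuousOn f (Ioi 0)) {u : ℝ}
    (hu : 0 < u) (a b : ℝ) :
    AEStronglyMeasurable (abelKernel f u a b)
      ((volume.restrict (Ioi u)).prod (volume.restrict (Ioi u))) := by
  have hS : MeasurableSet {p : ℝ × ℝ | p.1 < p.2} :=
    measurableSet_lt measurable_fst measurable_snd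
  rw [Measure.prod_restrict, abelKernel, aestronglyMeasurable_indicator_iff hS,
    Measure.restrict_restrict hS]
  refine ContinuousOn.aestronglyMeasurable ?_ (hS.inter (measurableSet_Ioi.prod measurableSet_Ioi))
  rintro p ⟨hp : p.1 < p.2, hp1 : u < p.1, -⟩
  refine ((continuousWithinAt_fst.sub continuousWithinAt_const).rpow_const
    (Or.inl (sub_pos.2 hp1).ne')).mul <|
    ((continuousWithinAt_snd.sub continuousWithinAt_fst).rpow_const
      (Or.inl (sub_pos.2 hp).ne')).mul ?_
  exact (hf.continuousAt (Ioi_mem_nhds (by linarith))).comp_continuousWithinAt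
    continuousWithinAt_snd

lemma integrable_abelKernel {f : ℝ → ℝ} {M u a b : ℝ} (hf : ContinuousOn f (Ioi 0))
    (hM : ∀ w, M ≤ w → f w = 0) (hu : 0 < u) (ha : -1 < a) (hb : -1 < b) :
    Integrable (abelKernel f u a b) ((volume.restrict (Ioi u)).prod (volume.restrict (Ioi u))) := by
  have habs : ContinuousOn (tailMoment (fun w => |f w|) b) (Ioi 0) :=
    continuousOn_tailMoment (M := M) hf.abs (fun w hw => by simp [hM w hw]) hb
  refine (integrable_prod_iff (aestronglyMeasurable_abelKernel hf hu a b)).2 ⟨?_, ?_⟩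
  · refine (ae_restrict_iff' measurableSet_Ioi).2 (Eventually.of_forall fun c (hc : u < c) => ?_)
    simp_rw [abelKernel_eq_indicator_Ioi]
    rw [integrable_indicator_iff measurableSet_Ioi, IntegrableOn,
      Measure.restrict_restrict measurableSet_Ioi, Ioi_inter_Ioi, max_eq_left hc.le]
    exact (integrableOn_Ioi_sub_rpow_mul hf hM (hu.trans hc) hb).const_mul _
  · have hint : IntegrableOn (fun c => (c - u) ^ a * tailMoment (fun w => |f w|) b c) (Ioi u) :=
      ((integrableOn_Ioc_sub_rpow ha u M).mul_continuousOn_of_subset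
        (habs.mono fun x (hx : x ∈ Icc u M) => hu.trans_le hx.1) measurableSet_Ioc isCompact_Icc
        Ioc_subset_Icc_self).of_forall_sdiff_eq_zero measurableSet_Ioi fun c hc => by
          rw [tailMoment_eq_zero_of_le (fun w hw => by simp [hM w hw])
            (not_le.1 (not_and.1 hc.2 hc.1)).le, mul_zero]
    refine hint.congr_fun_ae ((ae_restrict_iff' measurableSet_Ioi).2
      (Eventually.of_forall fun c (hc : u < c) => ?_))
    calc (c - u) ^ a * tailMoment (fun w => |f w|) b c
        = ∫ w in Ioi c, (c - u) ^ a * ((w - c) ^ b * |f w|) := by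
          rw [tailMoment, integral_const_mul]
      _ = ∫ w in Ioi u, ‖abelKernel f u a b (c, w)‖ := by
          rw [← setIntegral_Ioi_indicator_Ioi _ hc.le]
          refine setIntegral_congr_fun measurableSet_Ioi fun w _ => ?_
          rw [abelKernel_eq_indicator_Ioi, norm_indicator_eq_indicator_norm]
          by_cases hw : c < w
          · simp [indicator_of_mem (show w ∈ Ioi c from hw),
              abs_of_nonneg (rpow_nonneg (sub_nonneg.2 hc.le) a),
              abs_of_nonneg (rpow_nonneg (sub_nonneg.2 hw.le) b)]
          · simp [indicator_of_notMem (show w ∉ Ioi c from hw)]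

lemma integral_Ioi_sub_rpow_mul_tailMoment {f : ℝ → ℝ} {M u a b : ℝ}
    (hf : ContinuousOn f (Ioi 0)) (hM : ∀ w, M ≤ w → f w = 0) (hu : 0 < u) (ha : -1 < a)
    (hb : -1 < b) :
    ∫ c in Ioi u, (c - u) ^ a * tailMoment f b c = betaReal a b * tailMoment f (a + b + 1) u :=
  calc ∫ c in Ioi u, (c - u) ^ a * tailMoment f b c
      = ∫ c in Ioi u, ∫ w in Ioi u, abelKernel f u a b (c, w) := by
        refine setIntegral_congr_fun measurableSet_Ioi fun c (hc : u < c) => ?_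
        simp_rw [abelKernel_eq_indicator_Ioi]
        rw [setIntegral_Ioi_indicator_Ioi _ hc.le, tailMoment, integral_const_mul]
    _ = ∫ w in Ioi u, ∫ c in Ioi u, abelKernel f u a b (c, w) :=
        integral_integral_swap (integrable_abelKernel hf hM hu ha hb)
    _ = betaReal a b * tailMoment f (a + b + 1) u := by
        rw [tailMoment, ← integral_const_mul]
        refine setIntegral_congr_fun measurableSet_Ioi fun w (hw : u < w) => ?_
        simp_rw [abelKernel_eq_indicator_Iio]
        rw [integral_indicator measurableSet_Iio, Measure.restrict_restrict measurableSet_Iio,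
          Iio_inter_Ioi]
        simp_rw [← mul_assoc]
        rw [integral_mul_const, integral_Ioo_sub_rpow_mul_sub_rpow a b hw]
        ring

lemma tailMoment_eq_zero_of_tailMoment_add_one_eq_zero {f : ℝ → ℝ} {M b : ℝ}
    (hf : ContinuousOn f (Ioi 0)) (hM : ∀ w, M ≤ w → f w = 0) (hb : 0 ≤ b)
    (h : ∀ u, 0 < u → tailMoment f (b + 1) u = 0) {u : ℝ} (hu : 0 < u) :
    tailMoment f b u = 0 := by
  refine eq_zero_of_forall_integral_Ioi_eq_zero (continuousOn_tailMoment hf hM (by linarith))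
    (fun a ha => integrableOn_Ioi_of_continuousOn_of_eq_zero
      (continuousOn_tailMoment hf hM (by linarith))
      (fun w hw => tailMoment_eq_zero_of_le hM hw b) ha)
    (fun v hv => ?_) hu
  have hcomp := integral_Ioi_sub_rpow_mul_tailMoment hf hM hv neg_one_lt_zero (by linarith : -1 < b)
  simpa [h v hv] using hcomp

lemma eq_zero_of_tailMoment_natCast_eq_zero {f : ℝ → ℝ} {M : ℝ}
    (hf : ContinuousOn f (Ioi 0)) (hM : ∀ w, M ≤ w → f w = 0) (n : ℕ)
    (h : ∀ u, 0 < u → tailMoment f n u = 0) {u : ℝ} (hu : 0 < u) : f u = 0 := by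
  induction n with
  | zero =>
    exact eq_zero_of_forall_integral_Ioi_eq_zero hf
      (fun a ha => integrableOn_Ioi_of_continuousOn_of_eq_zero hf hM ha)
      (fun v hv => by simpa [tailMoment] using h v hv) hu
  | succ n ih =>
    exact ih fun v hv => tailMoment_eq_zero_of_tailMoment_add_one_eq_zero hf hM n.cast_nonneg
      (by exact_mod_cast h) hv

lemma eq_zero_of_tailMoment_eq_zero {f : ℝ → ℝ} {M b : ℝ} (hf : ContinuousOn f (Ioi 0))
    (hM : ∀ w, M ≤ w → f w = 0) (hb : -1 < b) {n : ℕ} (hn : b + b + 1 = n)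
    (h : ∀ u, 0 < u → tailMoment f b u = 0) {u : ℝ} (hu : 0 < u) : f u = 0 := by
  refine eq_zero_of_tailMoment_natCast_eq_zero hf hM n (fun v hv => ?_) hu
  have hcomp := integral_Ioi_sub_rpow_mul_tailMoment hf hM hv hb hb
  have hzero : ∫ c in Ioi v, (c - v) ^ b * tailMoment f b c = 0 :=
    setIntegral_eq_zero_of_forall_eq_zero fun c hc => by rw [h c (hv.trans hc), mul_zero]
  rw [hzero, hn, eq_comm] at hcomp
  exact (mul_eq_zero.1 hcomp).resolve_left (betaReal_ne_zero hb hb)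

lemma integral_comp_sq_add_mul_pow (g : ℝ → ℝ) (k : ℕ) (c : ℝ) :
    ∫ r in Ioi 0, g (r ^ 2 + c) * r ^ k = 2⁻¹ * tailMoment g ((k - 1) / 2) c := by
  rw [tailMoment_eq_integral_comp_add,
    ← integral_comp_rpow_Ioi (fun s => s ^ (((k : ℝ) - 1) / 2) * g (s + c)) two_ne_zero,
    ← integral_const_mul]
  refine setIntegral_congr_fun measurableSet_Ioi fun r (hr : 0 < r) => ?_
  have hpow : r * (r ^ (2 : ℝ)) ^ (((k : ℝ) - 1) / 2) = r ^ k :=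
    calc r * (r ^ (2 : ℝ)) ^ (((k : ℝ) - 1) / 2) = r ^ (1 : ℝ) * r ^ ((k : ℝ) - 1) := by
          rw [← rpow_mul hr.le, rpow_one]; ring_nf
      _ = r ^ k := by rw [← rpow_add hr, ← rpow_natCast]; ring_nf
  simp only [smul_eq_mul, abs_two, rpow_two, show (2 : ℝ) - 1 = 1 by norm_num, rpow_one]
    at hpow ⊢
  rw [← hpow]
  ring

/-- Injectivity of the (generalized) Abel transform. -/
theorem stmt10 (ζ : ℝ → ℝ) (hcont : ContinuousOn ζ (Set.Ioi 0))
    (hsupp : ∃ R : ℝ, 0 < R ∧ ∀ s : ℝ, R ≤ s → ζ s = 0) (k : ℕ)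
    (h : ∀ t : ℝ, 0 < t → ∫ r in Set.Ioi (0 : ℝ), ζ (Real.sqrt (r ^ 2 + t ^ 2)) * r ^ k = 0) :
    ∀ s : ℝ, 0 < s → ζ s = 0 := by
  obtain ⟨R, -, hR⟩ := hsupp
  set F : ℝ → ℝ := fun w => ζ (√w)
  have hFc : ContinuousOn F (Ioi 0) :=
    hcont.comp continuous_sqrt.continuousOn fun w hw => sqrt_pos.2 hw
  have hFR : ∀ w, R ^ 2 ≤ w → F w = 0 := fun w hw => hR _ (le_sqrt_of_sq_le hw)
  have hmoment : ∀ c, 0 < c → tailMoment F ((k - 1) / 2) c = 0 := fun c hc => by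
    have h' := (integral_comp_sq_add_mul_pow F k (√c ^ 2)).symm.trans (h _ (sqrt_pos.2 hc))
    simpa [sq_sqrt hc.le] using h'
  intro s hs
  simpa [F, sqrt_sq hs.le] using
    eq_zero_of_tailMoment_eq_zero hFc hFR (by linarith [k.cast_nonneg (α := ℝ)]) (by ring)
      hmoment (pow_pos hs 2)
end
end

section
/- Let n ≥ 1, let j ∈ {1,…,n} and let ζ ∈ Had_j^n. If v : ℝⁿ → ℝ is convex and twice continuously differentiable, then the function x ↦ ζ(|x|) [D²v(x)]_j is Lebesgue integrable on ℝⁿ. -/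
/-!
Near the origin `ζ(|x|) = O(|x|^{-(n-j)})`, and `n - j < n` makes this singularity integrable in
`ℝⁿ`. Away from the origin the integrand is continuous, `[D²v]_j` being a polynomial in the second
derivatives, and it vanishes outside the ball containing the support of `ζ`.
-/

open Filter Topology MeasureTheory Set

noncomputable section

open Asymptotics Metric Module

section RadialSingularity

variable {E F : Type*} [NormedAddCommGroup E] [NormedSpace ℝ E] [FiniteDimensional ℝ E]
  [MeasurableSpace E] [BorelSpace E] [NormedAddCommGroup F] {μ : Measure E} [μ.IsAddHaarMeasure]

theorem integrableAtFilter_nhds_zero_of_isBigO_rpow (hd : 1 ≤ finrank ℝ E) {f : E → F} {α : ℝ}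
    (hα : α < finrank ℝ E) (hf : f =O[𝓝[≠] 0] fun x => ‖x‖ ^ (-α))
    (hmeas : AEStronglyMeasurable f μ) : IntegrableAtFilter f (𝓝 0) μ := by
  have : Nontrivial E := nontrivial_of_finrank_pos (R := ℝ) (by omega)
  obtain ⟨C, hC⟩ := hf.bound
  obtain ⟨δ, hδ, hball⟩ := eventually_nhds_iff_ball.mp (eventually_nhdsWithin_iff.mp hC)
  refine ⟨ball 0 δ, ball_mem_nhds 0 hδ, integrableOn_ball_of_norm_le_rpow (C := C) hd hα ?_ hmeas⟩
  filter_upwards [ae_restrict_of_ae (compl_mem_ae_iff.2 (measure_singleton (μ := μ) (0 : E))),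
    ae_restrict_mem measurableSet_ball] with x hx0 hx
  simpa [abs_of_nonneg (Real.rpow_nonneg (norm_nonneg x) _)] using hball x hx hx0

theorem integrable_of_isBigO_rpow_of_continuousOn (hd : 1 ≤ finrank ℝ E) {f : E → F} {α : ℝ}
    (hα : α < finrank ℝ E) (hf : f =O[𝓝[≠] 0] fun x => ‖x‖ ^ (-α))
    (hcont : ContinuousOn f {0}ᶜ) (hsupp : HasCompactSupport f) : Integrable f μ := by
  have : Nontrivial E := nontrivial_of_finrank_pos (R := ℝ) (by omega)
  have hmeas : AEStronglyMeasurable f μ := by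
    simpa using hcont.aestronglyMeasurable (μ := μ) (measurableSet_singleton 0).compl
  have hloc : LocallyIntegrable f μ := by
    intro x
    rcases eq_or_ne x 0 with rfl | hx
    · exact integrableAtFilter_nhds_zero_of_isBigO_rpow hd hα hf hmeas
    · simpa [isOpen_compl_singleton.nhdsWithin_eq hx] using
        hcont.integrableAt_nhdsWithin (μ := μ) (measurableSet_singleton 0).compl hx
  exact (integrableOn_iff_integrable_of_support_subset (subset_tsupport f)).mp
    (hloc.integrableOn_isCompact hsupp)

theorem integrable_comp_norm_smul [NormedSpace ℝ F] (hd : 1 ≤ finrank ℝ E) {ζ : ℝ → ℝ}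
    {g : E → F} {α R : ℝ} (hα : α < finrank ℝ E) (hζ : ζ =O[𝓝[>] 0] fun s => s ^ (-α))
    (hζc : ContinuousOn ζ (Ioi 0)) (hζR : ∀ s, R ≤ s → ζ s = 0) (hg : Continuous g) :
    Integrable (fun x => ζ ‖x‖ • g x) μ := by
  refine integrable_of_isBigO_rpow_of_continuousOn hd hα ?_ ?_ ?_
  · have hg1 : g =O[𝓝[≠] 0] fun _ => (1 : ℝ) :=
      ((hg.tendsto 0).isBigO_one ℝ).mono nhdsWithin_le_nhds
    simpa using (hζ.comp_tendsto tendsto_norm_nhdsNE_zero).smul hg1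
  · refine (hζc.comp continuous_norm.continuousOn fun x hx => ?_).smul hg.continuousOn
    exact norm_pos_iff.2 hx
  · refine HasCompactSupport.intro (isCompact_closedBall 0 R) fun x hx => ?_
    rw [mem_closedBall_zero_iff, not_le] at hx
    rw [hζR ‖x‖ hx.le, zero_smul]

end RadialSingularity

theorem Matrix.continuous_charpoly_coeff {ι R : Type*} [Fintype ι] [DecidableEq ι] [CommRing R]
    [TopologicalSpace R] [IsTopologicalRing R] (m : ℕ) :
    Continuous fun A : Matrix ι ι R => A.charpoly.coeff m := by
  have h (A : Matrix ι ι R) : A.charpoly.coeff m =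
      MvPolynomial.eval (fun p : ι × ι => A p.1 p.2) ((Matrix.charpoly.univ R ι).coeff m) :=
    (Matrix.charpoly.univ_coeff_eval₂Hom ι (RingHom.id R) (fun p : ι × ι => A p.1 p.2) m).symm
  simp only [h]
  exact (MvPolynomial.continuous_eval _).comp
    (continuous_pi fun p => (continuous_apply p.2).comp (continuous_apply p.1))

theorem continuous_esymmMat (n k : ℕ) :
    Continuous fun A : Matrix (Fin n) (Fin n) ℝ => esymmMat A k :=
  continuous_const.mul (Matrix.continuous_charpoly_coeff _)

theorem HadClass.isBigO_rpow {n j : ℕ} {ζ : ℝ → ℝ} (hζ : HadClass n j ζ) (hj1 : 1 ≤ j)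
    (hjn : j ≤ n) : ζ =O[𝓝[>] 0] fun s => s ^ (-((n - j : ℕ) : ℝ)) := by
  obtain ⟨-, -, hlim⟩ := hζ
  rcases hjn.eq_or_lt with rfl | hjn
  · rw [if_pos rfl] at hlim
    simpa only [Nat.sub_self, Nat.cast_zero, neg_zero, Real.rpow_zero] using hlim.isBigO_one ℝ
  · rw [if_neg hjn.ne, if_neg (by omega)] at hlim
    have hbdd : (fun s => s ^ (n - j) * ζ s) =O[𝓝[>] 0] fun _ => (1 : ℝ) := hlim.1.isBigO_one ℝ
    have := (isBigO_refl (fun s : ℝ => (s ^ (n - j))⁻¹) (𝓝[>] 0)).mul hbdd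
    refine this.congr' ?_ ?_ <;> filter_upwards [self_mem_nhdsWithin] with s (hs : 0 < s)
    · field_simp
    · rw [mul_one, Real.rpow_neg hs.le, Real.rpow_natCast]

theorem ContDiff.continuous_hessMat {n : ℕ} {f : En n → ℝ} (hf : ContDiff ℝ 2 f) :
    Continuous (hessMat f) := by
  have hDf : ContDiff ℝ 1 (fderiv ℝ f) := hf.fderiv_right (by norm_num)
  refine continuous_matrix fun i j => ?_
  exact ((hDf.clm_apply contDiff_const).continuous_fderiv one_ne_zero).clm_apply continuous_const

theorem stmt12_general (n j : ℕ) (hj1 : 1 ≤ j) (hjn : j ≤ n) (ζ : ℝ → ℝ)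
    (hζ : HadClass n j ζ) (v : En n → ℝ)
    (hsmooth : ContDiff ℝ 2 v) :
    Integrable (fun x : En n => ζ ‖x‖ * esymmMat (hessMat v x) j) := by
  obtain ⟨R, -, hζR⟩ := hζ.2.1
  have hdim : finrank ℝ (En n) = n := finrank_euclideanSpace_fin
  have hα : ((n - j : ℕ) : ℝ) < finrank ℝ (En n) := by rw [hdim]; exact_mod_cast (by omega)
  exact integrable_comp_norm_smul (by omega) hα (hζ.isBigO_rpow hj1 hjn) hζ.1 hζR
    ((continuous_esymmMat n j).comp hsmooth.continuous_hessMat)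

/-- Integrability of `x ↦ ζ(|x|)[D²v(x)]_j` for convex `v ∈ C²(ℝⁿ)` and
`ζ ∈ Had_j^n`. -/
theorem stmt12 (n j : ℕ) (hn : 1 ≤ n) (hj1 : 1 ≤ j) (hjn : j ≤ n) (ζ : ℝ → ℝ)
    (hζ : HadClass n j ζ) (v : En n → ℝ) (hconv : ConvexOn ℝ Set.univ v)
    (hsmooth : ContDiff ℝ 2 v) :
    Integrable (fun x : En n => ζ ‖x‖ * esymmMat (hessMat v x) j) :=
  stmt12_general n j hj1 hjn ζ hζ v hsmooth
end
end

section
/- For a real n×n matrix A, let [A]_k denote the k-th elementary symmetric function of the eigenvalues (equivalently, (−1)^k times the coefficient of t^{n−k} in the characteristic polynomial of A), and for l,m ∈ {1,…,n} let [A]_k^{lm} := ∂[A]_k/∂a_{lm}, the partial derivative of the polynomial map A ↦ [A]_k with respect to the (l,m) entry. Then for every three times continuously differentiable function u : ℝⁿ → ℝ, every k ∈ {0,…,n}, every l ∈ {1,…,n} and every x ∈ ℝⁿ, one has ∑_{m=1}^{n} ∂/∂x_m ( [D²u(x)]_k^{lm} ) = 0, where D²u(x) denotes the Hessian matrix of u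 at x. -/
open Filter Topology MeasureTheory Set

noncomputable section

/-- `[A]ₖ^{lm}`: the partial derivative of `A ↦ [A]ₖ` with respect to the `(l,m)` entry. -/
def esymmEntryDeriv {n : ℕ} (k : ℕ) (l m : Fin n) (A : Matrix (Fin n) (Fin n) ℝ) : ℝ :=
  deriv (fun s : ℝ => esymmMat (A + s • Matrix.single l m (1 : ℝ)) k) 0


/-! Lagrange interpolation of the characteristic polynomial at `t = 0, …, n` writes `[A]ₖ` as a
fixed linear combination of the determinants `det (t • 1 - A)`, hence `[A]ₖ^{lm}` as the same
combination of the cofactors `det ((t • 1 - A) with row l replaced by eₘ)`. For a matrix field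
`N = t • 1 - D²u`, differentiating such a cofactor along `eₘ` and summing over `m` gives
`∑_{p ≠ l} ∑_{m,q} ∂ₘ N_{pq} · det (N with rows l, p replaced by eₘ, e_q)`, which vanishes
because `∂ₘ N_{pq} = -∂ₘ∂_p∂_q u` is symmetric in `m, q` while the determinant is antisymmetric. -/

section Determinant

variable {ι E : Type*} [DecidableEq ι] [NormedAddCommGroup E] [NormedSpace ℝ E]

theorem Matrix.differentiableAt_updateRow_apply {M : E → Matrix ι ι ℝ} {x : E}
    (hM : ∀ i j, DifferentiableAt ℝ (fun y => M y i j) x) (l : ι) (b : ι → ℝ) (i j : ι) :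
    DifferentiableAt ℝ (fun y => (M y).updateRow l b i j) x := by
  rcases eq_or_ne i l with rfl | hil
  · simp only [Matrix.updateRow_self, differentiableAt_const]
  · simpa only [Matrix.updateRow_ne hil] using hM i j

variable [Fintype ι]

def Matrix.detRowContinuousMultilinear (ι : Type*) [Fintype ι] [DecidableEq ι] :
    ContinuousMultilinearMap ℝ (fun _ : ι => ι → ℝ) ℝ where
  toMultilinearMap := (Matrix.detRowAlternating : (ι → ℝ) [⋀^ι]→ₗ[ℝ] ℝ).toMultilinearMap
  cont := continuous_id.matrix_det

theorem Matrix.hasFDerivAt_det {M : E → Matrix ι ι ℝ} {x : E}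
    (hM : ∀ i j, DifferentiableAt ℝ (fun y => M y i j) x) :
    HasFDerivAt (fun y => (M y).det)
      (∑ i, (detRowContinuousMultilinear ι).toContinuousLinearMap (M x) i ∘L
        .pi fun j => fderiv ℝ (fun y => M y i j) x) x :=
  HasFDerivAt.multilinear_comp (detRowContinuousMultilinear ι) fun i =>
    hasFDerivAt_pi.2 fun j => (hM i j).hasFDerivAt

theorem Matrix.fderiv_det_apply {M : E → Matrix ι ι ℝ} {x : E}
    (hM : ∀ i j, DifferentiableAt ℝ (fun y => M y i j) x) (v : E) :
    fderiv ℝ (fun y => (M y).det) x v =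
      ∑ i, ((M x).updateRow i fun j => fderiv ℝ (fun y => M y i j) x v).det := by
  rw [(hasFDerivAt_det hM).fderiv]
  simp only [_root_.sum_apply, ContinuousLinearMap.comp_apply, ContinuousLinearMap.coe_pi']
  rfl

theorem Matrix.det_updateRow_eq_sum {R : Type*} [CommRing R] (A : Matrix ι ι R) (i : ι)
    (w : ι → R) :
    (A.updateRow i w).det = ∑ j, w j * (A.updateRow i (Pi.single j 1)).det := by
  rw [det_eq_sum_mul_adjugate_row _ i]
  simp only [updateRow_self, adjugate_apply, updateRow_idem]

theorem Matrix.det_updateRow_updateRow_swap {R : Type*} [CommRing R] (A : Matrix ι ι R)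
    {i j : ι} (hij : i ≠ j) (v w : ι → R) :
    ((A.updateRow i v).updateRow j w).det = -((A.updateRow i w).updateRow j v).det := by
  have hswap : (A.updateRow i w).updateRow j v =
      ((A.updateRow i v).updateRow j w).submatrix (Equiv.swap i j) id := by
    ext r c
    rcases eq_or_ne r i with rfl | hri
    · simp [updateRow_apply, hij]
    rcases eq_or_ne r j with rfl | hrj
    · simp [updateRow_apply, hij]
    · simp [updateRow_apply, Equiv.swap_apply_of_ne_of_ne hri hrj, hri, hrj]
  rw [hswap, det_permute, Equiv.Perm.sign_swap hij]
  simp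

theorem Matrix.det_sub_smul_single {R : Type*} [CommRing R] (B : Matrix ι ι R) (l m : ι)
    (s : R) : (B - s • single l m 1).det = B.det - s * (B.updateRow l (Pi.single m 1)).det := by
  have hrow : B - s • single l m 1 = B.updateRow l (B l + (-s) • Pi.single m 1) := by
    ext i j
    rcases eq_or_ne i l with rfl | hil
    · simp [single, Pi.single_apply, eq_comm, sub_eq_add_neg]
    · simp [updateRow_ne hil, single, Ne.symm hil]
  rw [hrow, det_updateRow_add, det_updateRow_smul, updateRow_eq_self]
  ring

end Determinant

theorem Finset.sum_sum_mul_eq_zero_of_symm_of_antisymm {ι R : Type*} [Fintype ι] [Ring R]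
    [IsAddTorsionFree R] {s a : ι → ι → R} (hs : ∀ i j, s i j = s j i)
    (ha : ∀ i j, a i j = -a j i) :
    ∑ i, ∑ j, s i j * a i j = 0 := by
  rw [← self_eq_neg]
  calc ∑ i, ∑ j, s i j * a i j = ∑ j, ∑ i, s i j * a i j := Finset.sum_comm
    _ = ∑ j, ∑ i, -(s j i * a j i) :=
      Finset.sum_congr rfl fun j _ => Finset.sum_congr rfl fun i _ => by rw [hs, ha, mul_neg]
    _ = -∑ i, ∑ j, s i j * a i j := by simp only [Finset.sum_neg_distrib]

theorem sum_fderiv_det_updateRow_single_eq_zero {ι E : Type*} [Fintype ι] [DecidableEq ι]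
    [NormedAddCommGroup E] [NormedSpace ℝ E] {N : E → Matrix ι ι ℝ} {x : E} (e : ι → E)
    (hN : ∀ i j, DifferentiableAt ℝ (fun y => N y i j) x)
    (hsymm : ∀ i j k, fderiv ℝ (fun y => N y i j) x (e k) = fderiv ℝ (fun y => N y i k) x (e j))
    (l : ι) :
    ∑ m, fderiv ℝ (fun y => ((N y).updateRow l (Pi.single m 1)).det) x (e m) = 0 := by
  set D : ι → ι → ι → ℝ := fun i m q =>
    (((N x).updateRow l (Pi.single m 1)).updateRow i (Pi.single q 1)).det
  have hterm : ∀ m, fderiv ℝ (fun y => ((N y).updateRow l (Pi.single m 1)).det) x (e m) =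
      ∑ i ∈ Finset.univ.erase l, ∑ q, fderiv ℝ (fun y => N y i q) x (e m) * D i m q := by
    intro m
    rw [Matrix.fderiv_det_apply (Matrix.differentiableAt_updateRow_apply hN l _),
      ← Finset.sum_erase]
    · refine Finset.sum_congr rfl fun i hi => ?_
      simp only [Matrix.updateRow_ne (Finset.ne_of_mem_erase hi)]
      exact Matrix.det_updateRow_eq_sum _ _ _
    · refine Matrix.det_eq_zero_of_row_eq_zero l fun j => ?_
      simp [Matrix.updateRow_self]
  rw [Finset.sum_congr rfl fun m _ => hterm m, Finset.sum_comm]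
  exact Finset.sum_eq_zero fun i hi =>
    Finset.sum_sum_mul_eq_zero_of_symm_of_antisymm (fun m q => hsymm i q m) fun m q =>
      Matrix.det_updateRow_updateRow_swap _ (Finset.ne_of_mem_erase hi).symm _ _

theorem Polynomial.coeff_eq_sum_eval_mul_coeff_lagrangeBasis {K : Type*} [Field K] [CharZero K]
    {P : Polynomial K} {n : ℕ} (hP : P.natDegree ≤ n) (j : ℕ) :
    P.coeff j = ∑ i ∈ Finset.range (n + 1),
      P.eval (i : K) * (Lagrange.basis (Finset.range (n + 1)) (fun i : ℕ => (i : K)) i).coeff j := by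
  have hinj : Set.InjOn (fun i : ℕ => (i : K)) (Finset.range (n + 1)) :=
    Nat.cast_injective.injOn
  have hdeg : P.degree < (Finset.range (n + 1)).card := by
    rw [Finset.card_range]
    exact (Polynomial.degree_le_of_natDegree_le hP).trans_lt (by exact_mod_cast n.lt_succ_self)
  conv_lhs => rw [Lagrange.eq_interpolate hinj hdeg]
  simp only [Lagrange.interpolate_apply, Polynomial.finsetSum_coeff, Polynomial.coeff_C_mul]

def esymmWeight (n k i : ℕ) : ℝ :=
  (-1) ^ k * (Lagrange.basis (Finset.range (n + 1)) (fun j : ℕ => (j : ℝ)) i).coeff (n - k)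

section Esymm

variable {n : ℕ}

theorem esymmMat_eq_sum_det (A : Matrix (Fin n) (Fin n) ℝ) (k : ℕ) :
    esymmMat A k = ∑ i ∈ Finset.range (n + 1),
      esymmWeight n k i * (Matrix.scalar (Fin n) (i : ℝ) - A).det := by
  rw [esymmMat, Polynomial.coeff_eq_sum_eval_mul_coeff_lagrangeBasis (n := n) (by simp),
    Finset.mul_sum]
  refine Finset.sum_congr rfl fun i _ => ?_
  rw [Matrix.eval_charpoly, esymmWeight]
  ring

theorem esymmEntryDeriv_eq_sum (k : ℕ) (l m : Fin n) (A : Matrix (Fin n) (Fin n) ℝ) :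
    esymmEntryDeriv k l m A = -∑ i ∈ Finset.range (n + 1), esymmWeight n k i *
      ((Matrix.scalar (Fin n) (i : ℝ) - A).updateRow l (Pi.single m 1)).det := by
  set c := ∑ i ∈ Finset.range (n + 1), esymmWeight n k i *
      ((Matrix.scalar (Fin n) (i : ℝ) - A).updateRow l (Pi.single m 1)).det
  have haffine : (fun s : ℝ => esymmMat (A + s • Matrix.single l m 1) k) =
      fun s => esymmMat A k - s * c := by
    funext s
    simp only [esymmMat_eq_sum_det, sub_add_eq_sub_sub, Matrix.det_sub_smul_single, mul_sub,
      Finset.sum_sub_distrib, c, Finset.mul_sum]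
    congr 1
    exact Finset.sum_congr rfl fun i _ => by ring
  rw [esymmEntryDeriv, haffine, (((hasDerivAt_id' (0 : ℝ)).mul_const c).const_sub _).deriv]
  simp

variable {E : Type*} [NormedAddCommGroup E] [NormedSpace ℝ E] {M : E → Matrix (Fin n) (Fin n) ℝ}
  {x : E}

theorem fderiv_esymmEntryDeriv_apply (hM : ∀ p q, DifferentiableAt ℝ (fun y => M y p q) x)
    (k : ℕ) (l m : Fin n) (v : E) :
    fderiv ℝ (fun y => esymmEntryDeriv k l m (M y)) x v =
      -∑ i ∈ Finset.range (n + 1), esymmWeight n k i *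
        fderiv ℝ (fun y => ((Matrix.scalar (Fin n) (i : ℝ) - M y).updateRow l
          (Pi.single m 1)).det) x v := by
  have hdet : ∀ i : ℕ, DifferentiableAt ℝ
      (fun y => ((Matrix.scalar (Fin n) (i : ℝ) - M y).updateRow l (Pi.single m 1)).det) x :=
    fun i => (Matrix.hasFDerivAt_det (Matrix.differentiableAt_updateRow_apply
      (fun p q => (differentiableAt_const _).sub (hM p q)) l _)).differentiableAt
  simp only [esymmEntryDeriv_eq_sum]
  rw [fderiv_fun_neg, fderiv_fun_sum fun i _ => (hdet i).const_mul _, neg_apply,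
    _root_.sum_apply]
  simp only [fderiv_const_mul (hdet _), smul_apply, smul_eq_mul]

theorem sum_fderiv_esymmEntryDeriv_eq_zero (e : Fin n → E)
    (hM : ∀ p q, DifferentiableAt ℝ (fun y => M y p q) x)
    (hsymm : ∀ p q m, fderiv ℝ (fun y => M y p q) x (e m) = fderiv ℝ (fun y => M y p m) x (e q))
    (k : ℕ) (l : Fin n) :
    ∑ m, fderiv ℝ (fun y => esymmEntryDeriv k l m (M y)) x (e m) = 0 := by
  have hN : ∀ (i : ℕ) p q,
      DifferentiableAt ℝ (fun y => (Matrix.scalar (Fin n) (i : ℝ) - M y) p q) x :=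
    fun i p q => (differentiableAt_const _).sub (hM p q)
  have hNsymm : ∀ (i : ℕ) p q m,
      fderiv ℝ (fun y => (Matrix.scalar (Fin n) (i : ℝ) - M y) p q) x (e m) =
        fderiv ℝ (fun y => (Matrix.scalar (Fin n) (i : ℝ) - M y) p m) x (e q) := by
    intro i p q m
    simp only [Matrix.sub_apply, fderiv_const_sub, neg_apply, hsymm]
  simp only [fderiv_esymmEntryDeriv_apply hM, Finset.sum_neg_distrib, neg_eq_zero]
  rw [Finset.sum_comm]
  simp only [← Finset.mul_sum, sum_fderiv_det_updateRow_single_eq_zero e (hN _) (hNsymm _),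
    mul_zero, Finset.sum_const_zero]

end Esymm

section Hessian

theorem ContDiffAt.fderiv_fderiv_apply_comm {E F : Type*} [NormedAddCommGroup E]
    [NormedSpace ℝ E] [NormedAddCommGroup F] [NormedSpace ℝ F] {f : E → F} {x : E}
    (hf : ContDiffAt ℝ 2 f x) (v w : E) :
    fderiv ℝ (fun y => fderiv ℝ f y w) x v = fderiv ℝ (fun y => fderiv ℝ f y v) x w := by
  have hd : DifferentiableAt ℝ (fderiv ℝ f) x :=
    (hf.fderiv_right (m := 1) (by norm_num)).differentiableAt one_ne_zero
  rw [fderiv_clm_apply hd (differentiableAt_const w),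
    fderiv_clm_apply hd (differentiableAt_const v)]
  simpa using (hf.isSymmSndFDerivAt (by simp [minSmoothness_of_isRCLikeNormedField])).eq v w

variable {n : ℕ} {u : En n → ℝ}

theorem hessMat_apply_comm (hu : ContDiff ℝ 2 u) (y : En n) (i j : Fin n) :
    hessMat u y i j = hessMat u y j i :=
  hu.contDiffAt.fderiv_fderiv_apply_comm _ _

theorem differentiable_hessMat_apply (hu : ContDiff ℝ 3 u) (i j : Fin n) :
    Differentiable ℝ fun y => hessMat u y i j := by
  have hDu : ContDiff ℝ 2 fun z => fderiv ℝ u z (EuclideanSpace.single j 1) :=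
    (hu.fderiv_right (by norm_num)).clm_apply contDiff_const
  exact ((hDu.fderiv_right (m := 1) (by norm_num)).clm_apply contDiff_const).differentiable
    one_ne_zero

theorem fderiv_hessMat_apply_comm (hu : ContDiff ℝ 3 u) (x : En n) (i j k : Fin n) :
    fderiv ℝ (fun y => hessMat u y i j) x (EuclideanSpace.single k 1) =
      fderiv ℝ (fun y => hessMat u y i k) x (EuclideanSpace.single j 1) := by
  have hDu : ContDiff ℝ 2 fun z => fderiv ℝ u z (EuclideanSpace.single i 1) :=
    (hu.fderiv_right (by norm_num)).clm_apply contDiff_const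
  simp only [hessMat_apply_comm (hu.of_le (by norm_num)) _ i]
  exact hDu.contDiffAt.fderiv_fderiv_apply_comm _ _

end Hessian

theorem stmt14_general (n : ℕ) (u : En n → ℝ) (hu : ContDiff ℝ 3 u) (k : ℕ)
    (l : Fin n) (x : En n) :
    ∑ m : Fin n,
      fderiv ℝ (fun y => esymmEntryDeriv k l m (hessMat u y)) x
        (EuclideanSpace.single m (1 : ℝ)) = 0 :=
  sum_fderiv_esymmEntryDeriv_eq_zero _ (fun p q => differentiable_hessMat_apply hu p q x)
    (fderiv_hessMat_apply_comm hu x) k l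

/-- Reilly's lemma: the cofactor matrices of the Hessian are divergence free. -/
theorem stmt14 (n : ℕ) (u : En n → ℝ) (hu : ContDiff ℝ 3 u) (k : ℕ) (hk : k ≤ n)
    (l : Fin n) (x : En n) :
    ∑ m : Fin n,
      fderiv ℝ (fun y => esymmEntryDeriv k l m (hessMat u y)) x
        (EuclideanSpace.single m (1 : ℝ)) = 0 :=
  stmt14_general n u hu k l x
end
end
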